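/- Let ε ∈ (0,1), let d, t be positive integers, and let μ ∈ ℝ^d. Let p denote the density of N(μ, I_d), let f : ℝ^d → ℝ be any measurable function satisfying (1−ε)·p(x) ≤ f(x) ≤ p(x) for all x ∈ ℝ^d, and let P' denote the probability distribution on ℝ^d with density f(x)/∫_{ℝ^d} f. Then for every polynomial q : ℝ^d → ℝ of total degree at most t with E_{z∼N(0,I_d)}[q(z)²] = 1, it holds that E_{x∼P'}[q(x)] ≤ (1/(1−ε))·( |E_{x∼N(μ,I_d)}[q(x)]| + √ε · e^{t‖μ‖₂²/2} ). -/

import Mathlib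

open MeasureTheory

/-- The probability density function of the Gaussian `N(μ, I_d)` on `ℝ^d`. -/
noncomputable def mvGaussPDF (d : ℕ) (μ x : EuclideanSpace ℝ (Fin d)) : ℝ :=
  (2 * Real.pi) ^ (-(d : ℝ) / 2) * Real.exp (-‖x - μ‖ ^ 2 / 2)

/-! Write `p_ν` for the density of `N(ν, I_d)` and `f = p_μ - G`, so that `0 ≤ G ≤ ε p_μ`.
The denominator `∫ f` is at least `1 - ε`, and the numerator differs from `E_{N(μ,I)}[q]` by
`∫ q G`. By AM-GM against the weight `p₀`, `∫ |q| G ≤ ε e^{‖μ‖²/2}`: indeed `∫ q² p₀ = 1`, and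
`G² / p₀ ≤ ε² p_μ² / p₀ = ε² e^{‖μ‖²} p_{2μ}` integrates to `ε² e^{‖μ‖²}`. Finally
`ε e^{‖μ‖²/2} ≤ √ε e^{t‖μ‖²/2}` since `ε < 1 ≤ t`. -/

open Real

lemma one_add_norm_pow_mul_exp_le {E : Type*} [SeminormedAddCommGroup E] (n : ℕ) (x ν : E) :
    (1 + ‖x‖) ^ n * exp (-‖x - ν‖ ^ 2 / 2) ≤
      n.factorial * exp (2 + ‖ν‖) * exp (-(1 / 4) * ‖x - ν‖ ^ 2) := by
  have hpow : (1 + ‖x‖) ^ n ≤ n.factorial * exp (1 + ‖x‖) := by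
    have := pow_div_factorial_le_exp (1 + ‖x‖) (by positivity) n
    rwa [div_le_iff₀ (by positivity), mul_comm] at this
  have hexponent : 1 + ‖x‖ - ‖x - ν‖ ^ 2 / 2 ≤ 2 + ‖ν‖ - (1 / 4) * ‖x - ν‖ ^ 2 := by
    have := norm_le_norm_add_norm_sub' x ν
    nlinarith [sq_nonneg (‖x - ν‖ / 2 - 1)]
  calc (1 + ‖x‖) ^ n * exp (-‖x - ν‖ ^ 2 / 2)
      ≤ n.factorial * exp (1 + ‖x‖) * exp (-‖x - ν‖ ^ 2 / 2) := by gcongr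
    _ = n.factorial * exp (1 + ‖x‖ - ‖x - ν‖ ^ 2 / 2) := by
        rw [mul_assoc, ← exp_add]; ring_nf
    _ ≤ n.factorial * exp (2 + ‖ν‖ - (1 / 4) * ‖x - ν‖ ^ 2) := by gcongr
    _ = n.factorial * exp (2 + ‖ν‖) * exp (-(1 / 4) * ‖x - ν‖ ^ 2) := by
        rw [mul_assoc, ← exp_add]; ring_nf

lemma integrable_exp_neg_mul_sq_norm_sub {V : Type*} [NormedAddCommGroup V]
    [InnerProductSpace ℝ V] [FiniteDimensional ℝ V] [MeasurableSpace V] [BorelSpace V]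
    {b : ℝ} (hb : 0 < b) (ν : V) :
    Integrable fun x : V => exp (-b * ‖x - ν‖ ^ 2) := by
  have hint : Integrable fun x : V => exp (-b * ‖x‖ ^ 2) := by
    refine Integrable.of_integral_ne_zero ?_
    rw [GaussianFourier.integral_rexp_neg_mul_sq_norm hb]
    positivity
  exact hint.comp_sub_right ν

lemma exists_abs_eval_le_mul_one_add_norm_pow {ι : Type*} [Fintype ι]
    (q : MvPolynomial ι ℝ) : ∃ C N, ∀ x : EuclideanSpace ℝ ι,
      |MvPolynomial.eval (fun i => x i) q| ≤ C * (1 + ‖x‖) ^ N := by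
  induction q using MvPolynomial.induction_on with
  | C a => exact ⟨|a|, 0, fun x => by simp⟩
  | add q r hq hr =>
    obtain ⟨C, N, hC⟩ := hq
    obtain ⟨D, M, hD⟩ := hr
    refine ⟨|C| + |D|, max N M, fun x => ?_⟩
    have h1 : (1 : ℝ) ≤ 1 + ‖x‖ := le_add_of_nonneg_right (norm_nonneg x)
    have hN := pow_le_pow_right₀ h1 (le_max_left N M)
    have hM := pow_le_pow_right₀ h1 (le_max_right N M)
    rw [map_add]
    calc _ ≤ _ := abs_add_le _ _
      _ ≤ C * (1 + ‖x‖) ^ N + D * (1 + ‖x‖) ^ M := add_le_add (hC x) (hD x)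
      _ ≤ |C| * (1 + ‖x‖) ^ max N M + |D| * (1 + ‖x‖) ^ max N M := by
        gcongr ?_ + ?_
        · exact mul_le_mul (le_abs_self C) hN (by positivity) (abs_nonneg C)
        · exact mul_le_mul (le_abs_self D) hM (by positivity) (abs_nonneg D)
      _ = _ := by ring
  | mul_X q i hq =>
    obtain ⟨C, N, hC⟩ := hq
    refine ⟨C, N + 1, fun x => ?_⟩
    have hxi : |x i| ≤ 1 + ‖x‖ :=
      ((Real.norm_eq_abs _).symm.trans_le (PiLp.norm_apply_le x i)).trans
        (le_add_of_nonneg_left zero_le_one)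
    rw [map_mul, MvPolynomial.eval_X, abs_mul, pow_succ, ← mul_assoc]
    exact mul_le_mul (hC x) hxi (abs_nonneg _) ((abs_nonneg _).trans (hC x))

lemma continuous_eval_euclideanSpace {ι : Type*} [Fintype ι] (q : MvPolynomial ι ℝ) :
    Continuous fun x : EuclideanSpace ℝ ι => MvPolynomial.eval (fun i => x i) q :=
  (MvPolynomial.continuous_eval q).comp (by fun_prop)

lemma abs_le_half_mul_add_of_sq_le {y A B a : ℝ} (hA : 0 ≤ A) (hB : 0 ≤ B) (ha : 0 ≤ a)
    (h : y ^ 2 ≤ a ^ 2 * A * B) : |y| ≤ a / 2 * (A + B) := by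
  refine abs_le_of_sq_le_sq ?_ (by positivity)
  nlinarith [mul_nonneg (sq_nonneg a) (sq_nonneg (A - B))]

section Gaussian

variable {d : ℕ}

lemma mvGaussPDF_pos (ν x : EuclideanSpace ℝ (Fin d)) : 0 < mvGaussPDF d ν x := by
  unfold mvGaussPDF
  positivity

lemma continuous_mvGaussPDF (ν : EuclideanSpace ℝ (Fin d)) : Continuous (mvGaussPDF d ν) := by
  unfold mvGaussPDF
  fun_prop

lemma integrable_eval_mul_mvGaussPDF (q : MvPolynomial (Fin d) ℝ) (ν : EuclideanSpace ℝ (Fin d)) :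
    Integrable fun x => MvPolynomial.eval (fun i => x i) q * mvGaussPDF d ν x := by
  obtain ⟨C, N, hC⟩ := exists_abs_eval_le_mul_one_add_norm_pow q
  refine Integrable.mono'
    ((integrable_exp_neg_mul_sq_norm_sub (by norm_num : (0 : ℝ) < 1 / 4) ν).const_mul
      (C * (2 * π) ^ (-(d : ℝ) / 2) * (N.factorial * exp (2 + ‖ν‖))))
    ((continuous_eval_euclideanSpace q).mul (continuous_mvGaussPDF ν)).aestronglyMeasurable
    (Filter.Eventually.of_forall fun x => ?_)
  have hC0 : 0 ≤ C := by
    have := (abs_nonneg _).trans (hC x)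
    exact nonneg_of_mul_nonneg_left this (by positivity)
  rw [Real.norm_eq_abs, abs_mul, abs_of_pos (mvGaussPDF_pos ν x), mvGaussPDF]
  calc |MvPolynomial.eval (fun i => x i) q| * ((2 * π) ^ (-(d : ℝ) / 2) * exp (-‖x - ν‖ ^ 2 / 2))
      ≤ C * (1 + ‖x‖) ^ N * ((2 * π) ^ (-(d : ℝ) / 2) * exp (-‖x - ν‖ ^ 2 / 2)) := by
        gcongr; exact hC x
    _ = C * (2 * π) ^ (-(d : ℝ) / 2) * ((1 + ‖x‖) ^ N * exp (-‖x - ν‖ ^ 2 / 2)) := by ring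
    _ ≤ _ := by
        rw [mul_assoc (C * _)]
        exact mul_le_mul_of_nonneg_left (one_add_norm_pow_mul_exp_le N x ν) (by positivity)

lemma integrable_mvGaussPDF (ν : EuclideanSpace ℝ (Fin d)) : Integrable (mvGaussPDF d ν) := by
  simpa using integrable_eval_mul_mvGaussPDF 1 ν

lemma integral_mvGaussPDF (ν : EuclideanSpace ℝ (Fin d)) : ∫ x, mvGaussPDF d ν x = 1 := by
  unfold mvGaussPDF
  rw [integral_const_mul, integral_sub_right_eq_self (fun x => exp (-‖x‖ ^ 2 / 2)) ν]
  have hhalf : ∀ x : EuclideanSpace ℝ (Fin d), exp (-‖x‖ ^ 2 / 2) = exp (-(1 / 2) * ‖x‖ ^ 2) :=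
    fun x => by ring_nf
  simp_rw [hhalf]
  rw [GaussianFourier.integral_rexp_neg_mul_sq_norm (by norm_num), finrank_euclideanSpace_fin,
    div_div_eq_mul_div, div_one, mul_comm π, ← rpow_add (by positivity), neg_div, neg_add_cancel,
    rpow_zero]

lemma mvGaussPDF_sq (μ x : EuclideanSpace ℝ (Fin d)) :
    mvGaussPDF d μ x ^ 2 = exp (‖μ‖ ^ 2) * mvGaussPDF d ((2 : ℝ) • μ) x * mvGaussPDF d 0 x := by
  have hexp : exp (-‖x - μ‖ ^ 2 / 2) ^ 2 =
      exp (‖μ‖ ^ 2) * exp (-‖x - (2 : ℝ) • μ‖ ^ 2 / 2) * exp (-‖x - 0‖ ^ 2 / 2) := by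
    rw [sq, ← exp_add, ← exp_add, ← exp_add, sub_zero, norm_sub_sq_real, norm_sub_sq_real,
      real_inner_smul_right, norm_smul, Real.norm_ofNat]
    ring_nf
  unfold mvGaussPDF
  rw [mul_pow, hexp]
  ring

lemma integrable_eval_mul_of_abs_le_mul_mvGaussPDF (q : MvPolynomial (Fin d) ℝ)
    {μ : EuclideanSpace ℝ (Fin d)} {G : EuclideanSpace ℝ (Fin d) → ℝ} {c : ℝ}
    (hG : AEStronglyMeasurable G) (hGle : ∀ x, |G x| ≤ c * mvGaussPDF d μ x) :
    Integrable fun x => MvPolynomial.eval (fun i => x i) q * G x := by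
  refine Integrable.mono' ((integrable_eval_mul_mvGaussPDF q μ).norm.const_mul c)
    ((continuous_eval_euclideanSpace q).aestronglyMeasurable.mul hG)
    (Filter.Eventually.of_forall fun x => ?_)
  rw [Real.norm_eq_abs, Real.norm_eq_abs, abs_mul, abs_mul, abs_of_pos (mvGaussPDF_pos μ x)]
  calc _ ≤ |MvPolynomial.eval (fun i => x i) q| * (c * mvGaussPDF d μ x) := by
        gcongr; exact hGle x
    _ = _ := by ring

lemma integral_abs_eval_mul_le {ε : ℝ} (hε : 0 ≤ ε) (μ : EuclideanSpace ℝ (Fin d))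
    (q : MvPolynomial (Fin d) ℝ)
    (hnorm : ∫ z, MvPolynomial.eval (fun i => z i) q ^ 2 * mvGaussPDF d 0 z = 1)
    {G : EuclideanSpace ℝ (Fin d) → ℝ} (hG : Measurable G) (hG0 : ∀ x, 0 ≤ G x)
    (hGle : ∀ x, G x ≤ ε * mvGaussPDF d μ x) :
    ∫ x, |MvPolynomial.eval (fun i => x i) q * G x| ≤ ε * exp (‖μ‖ ^ 2 / 2) := by
  set Q := fun x : EuclideanSpace ℝ (Fin d) => MvPolynomial.eval (fun i => x i) q
  set a := ε * exp (‖μ‖ ^ 2 / 2)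
  have hpt : ∀ x,
      |Q x * G x| ≤ a / 2 * (Q x ^ 2 * mvGaussPDF d 0 x + mvGaussPDF d ((2 : ℝ) • μ) x) := by
    intro x
    refine abs_le_half_mul_add_of_sq_le (by positivity [mvGaussPDF_pos 0 x])
      (mvGaussPDF_pos _ x).le (by positivity) ?_
    have hG2 : G x ^ 2 ≤ (ε * mvGaussPDF d μ x) ^ 2 := pow_le_pow_left₀ (hG0 x) (hGle x) 2
    calc (Q x * G x) ^ 2 = Q x ^ 2 * G x ^ 2 := mul_pow _ _ _
      _ ≤ Q x ^ 2 * (ε * mvGaussPDF d μ x) ^ 2 := by gcongr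
      _ = a ^ 2 * (Q x ^ 2 * mvGaussPDF d 0 x) * mvGaussPDF d ((2 : ℝ) • μ) x := by
        rw [mul_pow ε, mvGaussPDF_sq, mul_pow ε, ← exp_nat_mul]
        ring_nf
  have hQ2 : Integrable fun x => Q x ^ 2 * mvGaussPDF d 0 x := by
    have := integrable_eval_mul_mvGaussPDF (q ^ 2) 0
    simpa only [map_pow] using this
  calc ∫ x, |Q x * G x|
      ≤ ∫ x, a / 2 * (Q x ^ 2 * mvGaussPDF d 0 x + mvGaussPDF d ((2 : ℝ) • μ) x) := by
        refine integral_mono ?_ ((hQ2.add (integrable_mvGaussPDF _)).const_mul _) hpt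
        refine (integrable_eval_mul_of_abs_le_mul_mvGaussPDF q hG.aestronglyMeasurable
          (c := ε) (μ := μ) fun x => ?_).abs
        rw [abs_of_nonneg (hG0 x)]
        exact hGle x
    _ = a := by
        rw [integral_const_mul, integral_add hQ2 (integrable_mvGaussPDF _), hnorm,
          integral_mvGaussPDF]
        ring

lemma integral_eval_mul_le_of_sandwich {ε : ℝ} (hε : 0 ≤ ε) (μ : EuclideanSpace ℝ (Fin d))
    (q : MvPolynomial (Fin d) ℝ)
    (hnorm : ∫ z, MvPolynomial.eval (fun i => z i) q ^ 2 * mvGaussPDF d 0 z = 1)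
    {f : EuclideanSpace ℝ (Fin d) → ℝ} (hf : Measurable f)
    (hsand : ∀ x, (1 - ε) * mvGaussPDF d μ x ≤ f x ∧ f x ≤ mvGaussPDF d μ x) :
    ∫ x, MvPolynomial.eval (fun i => x i) q * f x ≤
      |∫ x, MvPolynomial.eval (fun i => x i) q * mvGaussPDF d μ x| + ε * exp (‖μ‖ ^ 2 / 2) := by
  have hG : Measurable fun x => mvGaussPDF d μ x - f x :=
    (continuous_mvGaussPDF μ).measurable.sub hf
  have hG0 : ∀ x, 0 ≤ mvGaussPDF d μ x - f x := fun x => sub_nonneg.2 (hsand x).2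
  have hGle : ∀ x, mvGaussPDF d μ x - f x ≤ ε * mvGaussPDF d μ x := fun x => by
    linarith [(hsand x).1]
  have hQG : Integrable fun x => MvPolynomial.eval (fun i => x i) q * (mvGaussPDF d μ x - f x) :=
    integrable_eval_mul_of_abs_le_mul_mvGaussPDF q hG.aestronglyMeasurable (c := ε)
      fun x => (abs_of_nonneg (hG0 x)).trans_le (hGle x)
  have hsplit : ∫ x, MvPolynomial.eval (fun i => x i) q * f x =
      (∫ x, MvPolynomial.eval (fun i => x i) q * mvGaussPDF d μ x) -
        ∫ x, MvPolynomial.eval (fun i => x i) q * (mvGaussPDF d μ x - f x) := by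
    rw [← integral_sub (integrable_eval_mul_mvGaussPDF q μ) hQG]
    congr 1 with x
    ring
  linarith [neg_le_abs (∫ x, MvPolynomial.eval (fun i => x i) q * (mvGaussPDF d μ x - f x)),
    le_abs_self (∫ x, MvPolynomial.eval (fun i => x i) q * mvGaussPDF d μ x),
    abs_integral_le_integral_abs
      (f := fun x => MvPolynomial.eval (fun i => x i) q * (mvGaussPDF d μ x - f x)) (μ := volume),
    integral_abs_eval_mul_le hε μ q hnorm hG hG0 hGle]

lemma one_sub_le_integral_of_sandwich {ε : ℝ} (hε : ε ≤ 1) {μ : EuclideanSpace ℝ (Fin d)}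
    {f : EuclideanSpace ℝ (Fin d) → ℝ} (hf : Measurable f)
    (hsand : ∀ x, (1 - ε) * mvGaussPDF d μ x ≤ f x ∧ f x ≤ mvGaussPDF d μ x) :
    1 - ε ≤ ∫ x, f x := by
  have hfint : Integrable f := (integrable_mvGaussPDF μ).mono' hf.aestronglyMeasurable
    (Filter.Eventually.of_forall fun x => by
      rw [Real.norm_eq_abs, abs_le]
      constructor <;> nlinarith [hsand x, mvGaussPDF_pos μ x])
  simpa [integral_const_mul, integral_mvGaussPDF] using
    integral_mono ((integrable_mvGaussPDF μ).const_mul (1 - ε)) hfint fun x => (hsand x).1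

end Gaussian

theorem stmt15_general (ε : ℝ) (d t : ℕ) (ht : 0 < t)
    (hε : ε ∈ Set.Ioo (0 : ℝ) 1)
    (μ : EuclideanSpace ℝ (Fin d))
    (f : EuclideanSpace ℝ (Fin d) → ℝ) (hf : Measurable f)
    (hsand : ∀ x, (1 - ε) * mvGaussPDF d μ x ≤ f x ∧ f x ≤ mvGaussPDF d μ x)
    (q : MvPolynomial (Fin d) ℝ)
    (hnorm : (∫ z : EuclideanSpace ℝ (Fin d),
        (MvPolynomial.eval (fun i => z i) q) ^ 2 * mvGaussPDF d 0 z) = 1) :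
    (∫ x : EuclideanSpace ℝ (Fin d), MvPolynomial.eval (fun i => x i) q * f x) /
        (∫ x : EuclideanSpace ℝ (Fin d), f x) ≤
      (1 / (1 - ε)) *
        (|∫ x : EuclideanSpace ℝ (Fin d),
            MvPolynomial.eval (fun i => x i) q * mvGaussPDF d μ x| +
          Real.sqrt ε * Real.exp ((t : ℝ) * ‖μ‖ ^ 2 / 2)) := by
  obtain ⟨hε0, hε1⟩ := hε
  have hnum := integral_eval_mul_le_of_sandwich hε0.le μ q hnorm hf hsand
  have hden := one_sub_le_integral_of_sandwich hε1.le hf hsand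
  have hexp : ε * exp (‖μ‖ ^ 2 / 2) ≤ √ε * exp (t * ‖μ‖ ^ 2 / 2) := by
    gcongr
    · exact le_sqrt_self_iff.2 hε1.le
    have : (1 : ℝ) ≤ t := by exact_mod_cast ht
    nlinarith [sq_nonneg ‖μ‖]
  rw [one_div_mul_eq_div]
  exact div_le_div₀ (by positivity) (hnum.trans (by linarith)) (by linarith) hden

/-- For `ε ∈ (0,1)`, `μ ∈ ℝ^d` and an `ε`-corruption `f` of the density of
`N(μ, I_d)` with visible-sample distribution `P'`: every polynomial `q` of total degree
at most `t` with `E_{z∼N(0,I_d)}[q(z)²] = 1` satisfies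
`E_{x∼P'}[q(x)] ≤ (1/(1−ε))·(|E_{x∼N(μ,I_d)}[q(x)]| + √ε·e^{t‖μ‖²/2})`. -/
theorem stmt15 (ε : ℝ) (d t : ℕ) (hd : 0 < d) (ht : 0 < t)
    (hε : ε ∈ Set.Ioo (0 : ℝ) 1)
    (μ : EuclideanSpace ℝ (Fin d))
    (f : EuclideanSpace ℝ (Fin d) → ℝ) (hf : Measurable f)
    (hsand : ∀ x, (1 - ε) * mvGaussPDF d μ x ≤ f x ∧ f x ≤ mvGaussPDF d μ x)
    (q : MvPolynomial (Fin d) ℝ) (hq : q.totalDegree ≤ t)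
    (hnorm : (∫ z : EuclideanSpace ℝ (Fin d),
        (MvPolynomial.eval (fun i => z i) q) ^ 2 * mvGaussPDF d 0 z) = 1) :
    (∫ x : EuclideanSpace ℝ (Fin d), MvPolynomial.eval (fun i => x i) q * f x) /
        (∫ x : EuclideanSpace ℝ (Fin d), f x) ≤
      (1 / (1 - ε)) *
        (|∫ x : EuclideanSpace ℝ (Fin d),
            MvPolynomial.eval (fun i => x i) q * mvGaussPDF d μ x| +
          Real.sqrt ε * Real.exp ((t : ℝ) * ‖μ‖ ^ 2 / 2)) :=
  stmt15_general ε d t ht hε μ f hf hsand q hnorm
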